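/- Let F and F' be forests on the same finite vertex set V with the same degree sequence, and suppose F has at least one edge. If F and F' have no common trimmable leaf (i.e., no leaf has the same neighbor in F as in F'), then there exist four pairwise distinct vertices a,b,c,d with ab, cd ∈ E(F) and ac, bd ∉ E(F) such that the 2-switch G' of F at (a,b;c,d) is a forest and some leaf has the same neighbor in G' as in F'. -/

import Mathlib

open SimpleGraph

/-- Four pairwise distinct vertices `a,b,c,d` with `ab, cd ∈ E(G)` and `ac, bd ∉ E(G)`:
the condition under which the 2-switch of `G` at `(a,b;c,d)` is performed. -/
def Switchable {V : Type*} (G : SimpleGraph V) (a b c d : V) : Prop :=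
  a ≠ b ∧ a ≠ c ∧ a ≠ d ∧ b ≠ c ∧ b ≠ d ∧ c ≠ d ∧
    G.Adj a b ∧ G.Adj c d ∧ ¬ G.Adj a c ∧ ¬ G.Adj b d

/-- The 2-switch of `G` at `(a,b;c,d)`: the graph on `V` with edge set
`(E(G) \ {ab, cd}) ∪ {ac, bd}`. -/
def twoSwitch {V : Type*} (G : SimpleGraph V) (a b c d : V) : SimpleGraph V :=
  SimpleGraph.fromEdgeSet ((G.edgeSet \ {s(a, b), s(c, d)}) ∪ {s(a, c), s(b, d)})

/-- `G'` is obtained from `G` by a 2-switch. -/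
def ObtainedByTwoSwitch {V : Type*} (G G' : SimpleGraph V) : Prop :=
  ∃ a b c d : V, Switchable G a b c d ∧ G' = twoSwitch G a b c d

/-!
Choose a leaf `ℓ` of `F` whose `F`-neighbour `u` differs from its `F'`-neighbour `v`, such that
`v` is not a leaf of `F` in the component of `ℓ`. Then `v` has an `F`-neighbour `d` such that
deleting the edge `vd` separates `u` from `d`, and the 2-switch at `(ℓ,u;v,d)` is a forest: the
new edge `ud` rejoins the two sides of `vd`, and the new edge `ℓv` hangs the now isolated `ℓ`
onto `v`, making `ℓ` a leaf with the same neighbour as in `F'`.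

Such a leaf exists. Otherwise the `F'`-neighbour of every `F`-leaf is again an `F`-leaf, hence
also an `F'`-leaf, so every `F`-leaf spans a two-vertex component of `F'`. The neighbour `u₀` of
an `F`-leaf `ℓ₀` is not an `F`-leaf, since the `F'`-neighbour of `ℓ₀` lies in the same
`F`-component, so `u₀` has degree at least two; yet an `F'`-leaf reachable from `u₀` in `F'` is
an `F`-leaf, whose two-vertex `F'`-component would contain `u₀`.
-/

namespace SimpleGraph

variable {V : Type*} {G : SimpleGraph V}

lemma adj_iff_of_neighborSet_eq_singleton {x y z : V} (h : G.neighborSet x = {y}) :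
    G.Adj x z ↔ z = y := by
  rw [← mem_neighborSet, h, Set.mem_singleton_iff]

lemma adj_of_neighborSet_eq_singleton {x y : V} (h : G.neighborSet x = {y}) : G.Adj x y :=
  (adj_iff_of_neighborSet_eq_singleton h).mpr rfl

lemma Reachable.mem_of_forall_adj_mem {S : Set V} (hS : ∀ a ∈ S, ∀ b, G.Adj a b → b ∈ S)
    {x v : V} (hx : x ∈ S) (h : G.Reachable x v) : v ∈ S := by
  obtain ⟨p⟩ := h
  induction p with
  | nil => exact hx
  | cons hadj _ ih => exact ih (hS _ hx _ hadj)

lemma Reachable.eq_or_eq_of_neighborSet_eq_singleton {x y v : V}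
    (hx : G.neighborSet x = {y}) (hy : G.neighborSet y = {x}) (h : G.Reachable x v) :
    v = x ∨ v = y := by
  refine h.mem_of_forall_adj_mem (S := {x, y}) ?_ (by simp)
  rintro a (rfl | rfl) b hab
  · simp [(adj_iff_of_neighborSet_eq_singleton hx).mp hab]
  · simp [(adj_iff_of_neighborSet_eq_singleton hy).mp hab]

lemma IsAcyclic.exists_reachable_neighborSet_eq_singleton [Fintype V] (hG : G.IsAcyclic)
    {v : V} (hv : (G.neighborSet v).Nonempty) :
    ∃ w p, G.Reachable v w ∧ G.neighborSet w = {p} := by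
  classical
  have : Nonempty (Σ w, G.Path v w) := ⟨⟨v, Path.nil⟩⟩
  obtain ⟨⟨w, p, hp⟩, hmax⟩ :=
    Finite.exists_max (fun q : Σ w, G.Path v w => q.2.1.length)
  have hnil : ¬p.Nil := by
    obtain ⟨z, hz⟩ := hv
    have hlen : 1 ≤ p.length := hmax ⟨z, Path.singleton hz⟩
    exact fun h => by simp [h.length_eq_zero] at hlen
  refine ⟨w, p.penultimate, ⟨p⟩, Set.eq_singleton_iff_unique_mem.mpr
    ⟨(p.adj_penultimate hnil).symm, fun z (hz : G.Adj w z) => ?_⟩⟩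
  refine hG.eq_penultimate_of_adj_end hp hz ?_
  by_contra hzp
  have hlen : (p.concat hz).length ≤ p.length := hmax ⟨z, ⟨p.concat hz, hp.concat hzp hz⟩⟩
  rw [Walk.length_concat] at hlen
  omega

lemma IsAcyclic.exists_adj_not_reachable_deleteEdges (hG : G.IsAcyclic) {u v : V}
    (hv : (G.neighborSet v).Nonempty) (hdeg : G.Reachable v u → 1 < (G.neighborSet v).ncard) :
    ∃ d, G.Adj v d ∧ ¬(G.deleteEdges {s(v, d)}).Reachable u d := by
  classical
  by_cases hvu : G.Reachable v u
  -- choosing `d` off the path from `v` to `u`, the path survives the deletion of the bridge `vd`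
  · obtain ⟨p, hp⟩ := hvu.some.toPath
    obtain ⟨d, hd, hdp⟩ := Set.exists_ne_of_one_lt_ncard (hdeg hvu) p.snd
    refine ⟨d, hd, fun hud => isAcyclic_iff_forall_adj_isBridge.mp hG hd ?_⟩
    have hd_supp : d ∉ p.support := fun h => hdp (hG.eq_snd_of_adj_start hp hd h)
    have hvu' : (G.deleteEdges {s(v, d)}).Reachable v u :=
      ⟨p.toDeleteEdges _ fun e he h => hd_supp (by
        rw [Set.mem_singleton_iff] at h; subst h; exact p.snd_mem_support_of_mem_edges he)⟩
    exact hvu'.trans hud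
  · obtain ⟨d, hd⟩ := hv
    exact ⟨d, hd, fun hud => hvu ((hd.reachable.trans (hud.mono (deleteEdges_le _)).symm))⟩

end SimpleGraph

section TwoSwitch

variable {V : Type*}

lemma twoSwitch_eq (G : SimpleGraph V) (a b c d : V) :
    twoSwitch G a b c d = G.deleteEdges {s(a, b), s(c, d)} ⊔ edge a c ⊔ edge b d := by
  ext x y
  simp only [twoSwitch, fromEdgeSet_adj, sup_adj, deleteEdges_adj, edge_adj, Set.mem_union,
    Set.mem_sdiff, Set.mem_insert_iff, Set.mem_singleton_iff, mem_edgeSet, Sym2.eq_iff]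
  grind [Adj.ne]

section LeafSwitch

variable {G : SimpleGraph V} {ℓ u v d : V} (hℓ : G.neighborSet ℓ = {u}) (huv : u ≠ v)
  (hvd : G.Adj v d) (hsep : ¬(G.deleteEdges {s(v, d)}).Reachable u d)
include hℓ huv hvd hsep

lemma switchable_of_neighborSet_eq_singleton : Switchable G ℓ u v d := by
  have hadj {z} : G.Adj ℓ z ↔ z = u := adj_iff_of_neighborSet_eq_singleton hℓ
  have hud : u ≠ d := by rintro rfl; exact hsep .rfl
  have hℓv : ℓ ≠ v := by rintro rfl; exact hud (hadj.mp hvd).symm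
  have hℓd : ℓ ≠ d := by rintro rfl; exact huv (hadj.mp hvd.symm).symm
  refine ⟨(hadj.mpr rfl).ne, hℓv, hℓd, huv, hud, hvd.ne, hadj.mpr rfl, hvd,
    fun h => huv (hadj.mp h).symm, fun h => hsep (Adj.reachable ?_)⟩
  simp only [deleteEdges_adj, h, Set.mem_singleton_iff, Sym2.eq_iff, true_and]
  grind

lemma neighborSet_twoSwitch_eq_singleton : (twoSwitch G ℓ u v d).neighborSet ℓ = {v} := by
  obtain ⟨hℓu, hℓv, hℓd, -⟩ := switchable_of_neighborSet_eq_singleton hℓ huv hvd hsep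
  ext z
  simp only [mem_neighborSet, twoSwitch_eq, sup_adj, deleteEdges_adj, edge_adj,
    adj_iff_of_neighborSet_eq_singleton hℓ, Set.mem_insert_iff, Set.mem_singleton_iff,
    Sym2.eq_iff]
  grind

lemma isAcyclic_twoSwitch_of_neighborSet_eq_singleton (hG : G.IsAcyclic) :
    (twoSwitch G ℓ u v d).IsAcyclic := by
  obtain ⟨hℓu, hℓv, hℓd, -⟩ := switchable_of_neighborSet_eq_singleton hℓ huv hvd hsep
  set H := G.deleteEdges {s(ℓ, u), s(v, d)}
  have hHle : H ≤ G.deleteEdges {s(v, d)} := deleteEdges_anti (by simp)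
  have hℓ_iso : ∀ z, ¬(H ⊔ edge u d).Adj ℓ z := by
    intro z
    simp only [H, sup_adj, deleteEdges_adj, edge_adj, adj_iff_of_neighborSet_eq_singleton hℓ,
      Set.mem_insert_iff, Set.mem_singleton_iff]
    grind
  rw [twoSwitch_eq, sup_right_comm]
  refine .sup_edge_of_not_reachable (fun h => hℓv ?_)
    (.sup_edge_of_not_reachable (fun h => hsep (h.mono hHle)) (hG.anti (deleteEdges_le _)))
  refine (h.mem_of_forall_adj_mem (S := {ℓ}) ?_ rfl).symm
  rintro a rfl z hz
  exact (hℓ_iso z hz).elim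

end LeafSwitch

lemma exists_leaf_of_no_common_trimmable_leaf [Fintype V] {F F' : SimpleGraph V}
    (hF : F.IsAcyclic) (hF' : F'.IsAcyclic)
    (hdeg : ∀ v : V, (F.neighborSet v).ncard = (F'.neighborSet v).ncard)
    (hne : F.edgeSet.Nonempty)
    (hno : ¬ ∃ ℓ u : V, (F.neighborSet ℓ).ncard = 1 ∧ F.Adj ℓ u ∧ F'.Adj ℓ u) :
    ∃ ℓ u v, F.neighborSet ℓ = {u} ∧ F'.neighborSet ℓ = {v} ∧ u ≠ v ∧
      (F.Reachable ℓ v → (F.neighborSet v).ncard ≠ 1) := by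
  by_contra! H
  have partner {ℓ u : V} (hℓ : F.neighborSet ℓ = {u}) : ∃ m,
      F'.neighborSet ℓ = {m} ∧ F'.neighborSet m = {ℓ} ∧ m ≠ u ∧ F.Reachable ℓ m := by
    have hℓ1 : (F.neighborSet ℓ).ncard = 1 := by simp [hℓ]
    obtain ⟨m, hm⟩ := Set.ncard_eq_one.mp (hdeg ℓ ▸ hℓ1)
    have hum : u ≠ m := by
      rintro rfl
      exact hno ⟨ℓ, u, hℓ1, adj_of_neighborSet_eq_singleton hℓ,
        adj_of_neighborSet_eq_singleton hm⟩
    obtain ⟨hreach, hm1⟩ := H ℓ u m hℓ hm hum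
    obtain ⟨x, hx⟩ := Set.ncard_eq_one.mp (hdeg m ▸ hm1)
    obtain rfl : ℓ = x :=
      (adj_iff_of_neighborSet_eq_singleton hx).mp (adj_of_neighborSet_eq_singleton hm).symm
    exact ⟨m, hm, hx, hum.symm, hreach⟩
  obtain ⟨a, b, hab⟩ := ne_bot_iff_exists_adj.mp (edgeSet_nonempty.mp hne)
  obtain ⟨ℓ₀, u₀, -, hℓ₀⟩ := hF.exists_reachable_neighborSet_eq_singleton ⟨b, hab⟩
  obtain ⟨m₀, hm₀, -, hm₀u₀, hℓ₀m₀⟩ := partner hℓ₀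
  have hu₀ : 1 < (F'.neighborSet u₀).ncard := by
    have hu₀ℓ₀ : F.Adj u₀ ℓ₀ := (adj_of_neighborSet_eq_singleton hℓ₀).symm
    rw [← hdeg]
    refine lt_of_le_of_ne ((Set.ncard_pos (Set.toFinite _)).mpr ⟨ℓ₀, hu₀ℓ₀⟩) fun h => ?_
    obtain ⟨x, hx⟩ := Set.ncard_eq_one.mp h.symm
    obtain rfl : ℓ₀ = x := (adj_iff_of_neighborSet_eq_singleton hx).mp hu₀ℓ₀
    rcases hℓ₀m₀.eq_or_eq_of_neighborSet_eq_singleton hℓ₀ hx with h | h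
    · exact (adj_of_neighborSet_eq_singleton hm₀).ne h.symm
    · exact hm₀u₀ h
  obtain ⟨w, _, hu₀w, hw⟩ := hF'.exists_reachable_neighborSet_eq_singleton
    (Set.nonempty_of_ncard_ne_zero (s := F'.neighborSet u₀) (by omega))
  obtain ⟨n, hn⟩ := Set.ncard_eq_one.mp ((hdeg w).trans (by simp [hw]))
  obtain ⟨m, hm, hmw, -⟩ := partner hn
  rcases hu₀w.symm.eq_or_eq_of_neighborSet_eq_singleton hm hmw with h | h <;>
    simp [h, hm, hmw] at hu₀

end TwoSwitch

/-- if two forests with the same degree sequence have no common trimmable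
leaf, some f-switch of the first creates a trimmable leaf. -/
theorem stmt_4 {V : Type*} [Fintype V] (F F' : SimpleGraph V)
    (hF : F.IsAcyclic) (hF' : F'.IsAcyclic)
    (hdeg : ∀ v : V, (F.neighborSet v).ncard = (F'.neighborSet v).ncard)
    (hne : F.edgeSet.Nonempty)
    (hno : ¬ ∃ ℓ u : V, (F.neighborSet ℓ).ncard = 1 ∧ F.Adj ℓ u ∧ F'.Adj ℓ u) :
    ∃ a b c d : V, Switchable F a b c d ∧ (twoSwitch F a b c d).IsAcyclic ∧
      ∃ ℓ u : V, ((twoSwitch F a b c d).neighborSet ℓ).ncard = 1 ∧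
        (twoSwitch F a b c d).Adj ℓ u ∧ F'.Adj ℓ u := by
  obtain ⟨ℓ, u, v, hℓ, hℓ', huv, hfar⟩ :=
    exists_leaf_of_no_common_trimmable_leaf hF hF' hdeg hne hno
  have hℓu : F.Adj ℓ u := adj_of_neighborSet_eq_singleton hℓ
  have hℓv : F'.Adj ℓ v := adj_of_neighborSet_eq_singleton hℓ'
  have hv : 0 < (F.neighborSet v).ncard := by
    rw [hdeg]; exact (Set.ncard_pos (Set.toFinite _)).mpr ⟨ℓ, hℓv.symm⟩
  obtain ⟨d, hvd, hsep⟩ := hF.exists_adj_not_reachable_deleteEdges (u := u)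
    (Set.nonempty_of_ncard_ne_zero hv.ne') fun hvu =>
      lt_of_le_of_ne hv (hfar (hℓu.reachable.trans hvu.symm)).symm
  have hN := neighborSet_twoSwitch_eq_singleton hℓ huv hvd hsep
  exact ⟨ℓ, u, v, d, switchable_of_neighborSet_eq_singleton hℓ huv hvd hsep,
    isAcyclic_twoSwitch_of_neighborSet_eq_singleton hℓ huv hvd hsep hF,
    ℓ, v, by simp [hN], adj_of_neighborSet_eq_singleton hN, hℓv⟩
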